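/- For all nonnegative integers t and all n ≥ 0, the number of overpartition t-tuples satisfies p̄_t(4n+2) ≡ 0 (mod 4). -/

import Mathlib

/-!
A partition of `N` with `k` distinct part sizes underlies `2 ^ k` overpartitions, so modulo 4
only the partitions with a single part size survive; these are the partitions `d + ⋯ + d`, one
for each divisor `d` of `N`. Hence `p̄(N) ≡ 2 d(N) (mod 4)` for `N > 0`; in particular `p̄(N)`
is even, and `4 ∣ p̄(4n + 2)` because `d(4n + 2) = 2 d(2n + 1)`. In `p̄_t(N) = ∑ ∏ p̄(Nᵢ)`, a
term with two nonzero `Nᵢ` is a product of two even numbers, so modulo 4 only the `t` tuples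
concentrated in one coordinate remain: `p̄_t(N) ≡ t p̄(N) (mod 4)`.
-/

/-- The number of overpartitions of `n`: a partition of `n` together with a
choice of which distinct part values are overlined (the first occurrence of a
part value may be overlined), so that the count is `∑_{λ ⊢ n} 2^{#distinct parts of λ}`. -/
def overpartitionCount (n : ℕ) : ℕ :=
  ∑ p : n.Partition, 2 ^ p.parts.toFinset.card

/-- The number of overpartition `t`-tuples of `n`: `t`-tuples of overpartitions
whose sizes sum to `n`. -/
def overpartitionTuples (t n : ℕ) : ℕ :=
  ∑ c ∈ Finset.Nat.antidiagonalTuple t n, ∏ i, overpartitionCount (c i)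

open Finset

theorem Finset.Nat.sum_antidiagonalTuple_succ {M : Type*} [AddCommMonoid M] (k n : ℕ)
    (f : (Fin (k + 1) → ℕ) → M) :
    ∑ x ∈ Nat.antidiagonalTuple (k + 1) n, f x =
      ∑ p ∈ antidiagonal n, ∑ x ∈ Nat.antidiagonalTuple k p.2, f (Fin.cons p.1 x) := by
  simp only [sum_eq_multiset_sum]
  -- `List.Nat.antidiagonalTuple (k + 1) n` is defined as a `flatMap` over `antidiagonal n`.
  show (((List.Nat.antidiagonalTuple (k + 1) n).map f : List M) : Multiset M).sum =
    (((List.Nat.antidiagonal n).map fun p => ((List.Nat.antidiagonalTuple k p.2).map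
      fun x => f (Fin.cons p.1 x)).sum : List M) : Multiset M).sum
  simp [List.Nat.antidiagonalTuple, List.flatMap_def, List.sum_flatten, Function.comp_def]

theorem Finset.Nat.sum_antidiagonalTuple_prod_of_mul_eq_zero {R : Type*} [CommSemiring R]
    {f : ℕ → R} (hf₀ : f 0 = 1) (hf : ∀ a b, a ≠ 0 → b ≠ 0 → f a * f b = 0) (k : ℕ)
    {n : ℕ} (hn : n ≠ 0) : ∑ x ∈ Nat.antidiagonalTuple k n, ∏ i, f (x i) = k * f n := by
  induction k generalizing n with
  | zero =>
    obtain ⟨m, rfl⟩ := Nat.exists_eq_succ_of_ne_zero hn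
    simp
  | succ k ih =>
    rw [Nat.sum_antidiagonalTuple_succ]
    simp only [Fin.prod_univ_succ, Fin.cons_zero, Fin.cons_succ, ← mul_sum]
    rw [sum_eq_add_of_mem (0, n) (n, 0) (by simp) (by simp) (by simp [hn])]
    · simp only [hf₀, ih hn, one_mul, Nat.antidiagonalTuple_zero_right, sum_singleton,
        Pi.zero_apply, prod_const_one, mul_one, Nat.cast_add, Nat.cast_one]
      ring
    · rintro ⟨a, b⟩ hab ⟨hab₀, hab₁⟩
      rw [HasAntidiagonal.mem_antidiagonal] at hab
      have ha : a ≠ 0 := by rintro rfl; simp_all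
      have hb : b ≠ 0 := by rintro rfl; simp_all
      rw [ih hb, mul_left_comm, hf a b ha hb, mul_zero]

theorem Nat.card_divisors_two_mul_of_odd {m : ℕ} (hm : Odd m) :
    #(2 * m).divisors = 2 * #m.divisors := by
  rw [Nat.Coprime.card_divisors_mul (Nat.coprime_two_left.2 hm), Nat.prime_two.divisors,
    card_pair (by norm_num)]

namespace Nat.Partition

theorem parts_ne_zero {N : ℕ} (p : N.Partition) (hN : N ≠ 0) : p.parts ≠ 0 := by
  intro h
  exact hN (by simpa [h] using p.parts_sum.symm)

def replicateDivisor {N d : ℕ} (hd : d ∈ N.divisors) : N.Partition where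
  parts := Multiset.replicate (N / d) d
  parts_pos hi := Multiset.eq_of_mem_replicate hi ▸ Nat.pos_of_mem_divisors hd
  parts_sum := by
    rw [Multiset.sum_replicate, smul_eq_mul, Nat.div_mul_cancel (Nat.dvd_of_mem_divisors hd)]

theorem toFinset_parts_replicateDivisor {N d : ℕ} (hd : d ∈ N.divisors) :
    (replicateDivisor hd).parts.toFinset = {d} := by
  refine Multiset.toFinset_replicate .. |>.trans (if_neg ?_)
  exact (Nat.div_pos (Nat.divisor_le hd) (Nat.pos_of_mem_divisors hd)).ne'

theorem card_filter_card_toFinset_parts_eq_one {N : ℕ} (hN : N ≠ 0) :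
    #{p : N.Partition | #p.parts.toFinset = 1} = #N.divisors := by
  symm
  refine card_bij (fun d hd => replicateDivisor hd) (fun d hd => ?_)
    (fun d₁ h₁ d₂ h₂ h => ?_) ?_
  · simp [toFinset_parts_replicateDivisor]
  · simpa [toFinset_parts_replicateDivisor] using congrArg (·.parts.toFinset) h
  · intro p hp
    obtain ⟨d, hd⟩ := card_eq_one.1 (mem_filter.1 hp).2
    have hrep : p.parts = Multiset.replicate (Multiset.card p.parts) d :=
      Multiset.eq_replicate_card.2 fun b hb => by simpa [hd] using Multiset.mem_toFinset.2 hb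
    have hsum : Multiset.card p.parts * d = N := by
      rw [← smul_eq_mul, ← Multiset.sum_replicate, ← hrep, p.parts_sum]
    have hd₀ : 0 < d := p.parts_pos (Multiset.mem_toFinset.1 (by simp [hd]))
    refine ⟨d, Nat.mem_divisors.2 ⟨Dvd.intro_left _ hsum, hN⟩, Nat.Partition.ext ?_⟩
    show Multiset.replicate (N / d) d = p.parts
    rw [hrep, Nat.div_eq_of_eq_mul_left hd₀ hsum.symm]

end Nat.Partition

theorem overpartitionCount_zero : overpartitionCount 0 = 1 := by
  simp [overpartitionCount]

theorem overpartitionCount_cast_zmod_four {N : ℕ} (hN : N ≠ 0) :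
    (overpartitionCount N : ZMod 4) = 2 * #N.divisors := by
  rw [overpartitionCount, Nat.cast_sum,
    ← sum_filter_add_sum_filter_not univ fun p : N.Partition => #p.parts.toFinset = 1]
  have hsingle : ∑ p : N.Partition with #p.parts.toFinset = 1,
      ((2 ^ #p.parts.toFinset : ℕ) : ZMod 4) = 2 * #N.divisors := by
    rw [sum_congr rfl fun p hp => by rw [(mem_filter.1 hp).2], sum_const,
      Nat.Partition.card_filter_card_toFinset_parts_eq_one hN]
    simp [mul_comm]
  have hmany : ∑ p : N.Partition with ¬#p.parts.toFinset = 1,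
      ((2 ^ #p.parts.toFinset : ℕ) : ZMod 4) = 0 := by
    refine sum_eq_zero fun p hp => ?_
    have h₁ := (mem_filter.1 hp).2
    have h₀ : #p.parts.toFinset ≠ 0 := by simpa using p.parts_ne_zero hN
    push_cast
    exact pow_eq_zero_of_le (by omega) (by decide : (2 : ZMod 4) ^ 2 = 0)
  rw [hsingle, hmany, add_zero]

theorem overpartitionTuples_cast_zmod_four (t : ℕ) {N : ℕ} (hN : N ≠ 0) :
    (overpartitionTuples t N : ZMod 4) = t * overpartitionCount N := by
  rw [overpartitionTuples, Nat.cast_sum]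
  push_cast
  refine Nat.sum_antidiagonalTuple_prod_of_mul_eq_zero
    (f := fun m => (overpartitionCount m : ZMod 4)) (by simp [overpartitionCount_zero])
    (fun a b ha hb => ?_) t hN
  rw [overpartitionCount_cast_zmod_four ha, overpartitionCount_cast_zmod_four hb]
  linear_combination (#a.divisors * #b.divisors : ZMod 4) * (by decide : (4 : ZMod 4) = 0)

theorem overpartitionTuples_four_n_two_mod_four (t n : ℕ) :
    overpartitionTuples t (4 * n + 2) ≡ 0 [MOD 4] := by
  have hdiv : #(4 * n + 2).divisors = 2 * #(2 * n + 1).divisors := by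
    rw [show 4 * n + 2 = 2 * (2 * n + 1) by ring,
      Nat.card_divisors_two_mul_of_odd (odd_two_mul_add_one n)]
  rw [← ZMod.natCast_eq_natCast_iff, overpartitionTuples_cast_zmod_four t (by omega),
    overpartitionCount_cast_zmod_four (by omega), hdiv]
  push_cast
  linear_combination (t * #(2 * n + 1).divisors : ZMod 4) * (by decide : (4 : ZMod 4) = 0)
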